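/- Fix a nonempty finite set A ⊆ 𝔽₂ⁿ. For any independent 𝔽₂ⁿ-valued random variables X, Y and any (X, Z) jointly distributed with X taking values in 𝔽₂ⁿ: τ⁺(X+Y) ≤ τ⁺(X) + H(X+Y) − H(X), and τ⁺(X | Z) ≤ τ⁺(X). -/

import Mathlib

open scoped BigOperators Pointwise Classical

noncomputable section

/-- `𝔽₂ⁿ`, the `n`-dimensional vector space over the field with two elements. -/
abbrev F2 (n : ℕ) : Type := Fin n → ZMod 2

/-- `f` is a probability distribution on the finite type `α`. -/
def IsDist {α : Type*} [Fintype α] (f : α → ℝ) : Prop :=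
  (∀ x, 0 ≤ f x) ∧ ∑ x, f x = 1

/-- Shannon entropy (base 2) of a distribution on a finite type. -/
def ent {α : Type*} [Fintype α] (f : α → ℝ) : ℝ :=
  ∑ x, -(f x * Real.logb 2 (f x))

/-- Distribution of `X + Y` for independent `X ∼ f`, `Y ∼ g`. -/
def addDist {α : Type*} [Fintype α] [AddGroup α] (f g : α → ℝ) : α → ℝ :=
  fun s => ∑ x, f x * g (s - x)

/-- Distribution of `X - Y` for independent `X ∼ f`, `Y ∼ g`. -/
def subDist {α : Type*} [Fintype α] [AddGroup α] (f g : α → ℝ) : α → ℝ :=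
  fun s => ∑ x, f x * g (x - s)

/-- Entropic Ruzsa distance `d[X;Y] = H(X' + Y') - (H(X) + H(Y))/2` (in `𝔽₂ⁿ`
addition coincides with subtraction). -/
def rdist {α : Type*} [Fintype α] [AddGroup α] (f g : α → ℝ) : ℝ :=
  ent (addDist f g) - (ent f + ent g) / 2

/-- Entropic Ruzsa distance `d[X;Y] = H(X' - Y') - (H(X) + H(Y))/2` in a general group. -/
def rdistSub {α : Type*} [Fintype α] [AddGroup α] (f g : α → ℝ) : ℝ :=
  ent (subDist f g) - (ent f + ent g) / 2

/-- Pushforward of a distribution along a map. -/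
def pmap {α β : Type*} [Fintype α] (h : α → β) (π : α → ℝ) : β → ℝ :=
  fun b => ∑ a, if h a = b then π a else 0

/-- First marginal of a joint distribution. -/
def margFst {α γ : Type*} [Fintype γ] (π : α × γ → ℝ) : α → ℝ :=
  fun a => ∑ z, π (a, z)

/-- Second marginal of a joint distribution. -/
def margSnd {α γ : Type*} [Fintype α] (π : α × γ → ℝ) : γ → ℝ :=
  fun z => ∑ a, π (a, z)

/-- Conditional distribution of the first coordinate given that the second equals `z`. -/
def condDist {α γ : Type*} [Fintype α] (π : α × γ → ℝ) (z : γ) : α → ℝ :=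
  fun a => π (a, z) / margSnd π z

/-- Conditional entropy `H(X | Z) = E_{z ∼ Z} H(X |_{Z = z})`. -/
def condEnt {α γ : Type*} [Fintype α] [Fintype γ] (π : α × γ → ℝ) : ℝ :=
  ∑ z, margSnd π z * ent (condDist π z)

/-- Mutual information `I(X : Y) = H(X) + H(Y) - H(X, Y)`. -/
def mutInfo {α β : Type*} [Fintype α] [Fintype β] (π : α × β → ℝ) : ℝ :=
  ent (margFst π) + ent (margSnd π) - ent π

/-- Conditional mutual information `I(X : Y | Z) = E_{z ∼ Z} I(X|_{Z=z} : Y|_{Z=z})`. -/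
def condMutInfo {α β γ : Type*} [Fintype α] [Fintype β] [Fintype γ]
    (π : (α × β) × γ → ℝ) : ℝ :=
  ∑ z, margSnd π z * mutInfo (condDist π z)

/-- Conditioned Ruzsa distance `d[(X;Y) | Z] = E_{z ∼ Z} d[X|_{Z=z} ; Y|_{Z=z}]`, where
inside the expectation the two conditioned variables are treated as independent. -/
def condRdist {α γ : Type*} [Fintype α] [Fintype γ] [AddGroup α]
    (π : (α × α) × γ → ℝ) : ℝ :=
  ∑ z, margSnd π z * rdist (pmap Prod.fst (condDist π z)) (pmap Prod.snd (condDist π z))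

/-- Doubly conditioned Ruzsa distance `d[X | Z ; Y | W] = E_{z,w} d[X|_{Z=z} ; Y|_{W=w}]`
for `(X,Z)` independent of `(Y,W)`. -/
def condRdist2 {α γ δ : Type*} [Fintype α] [Fintype γ] [Fintype δ] [AddGroup α]
    (π : α × γ → ℝ) (ρ : α × δ → ℝ) : ℝ :=
  ∑ z, ∑ w, margSnd π z * margSnd ρ w * rdist (condDist π z) (condDist ρ w)

/-- The uniform distribution on a finite set `A`. -/
def unifFin {α : Type*} [Fintype α] (A : Finset α) : α → ℝ :=
  fun x => if x ∈ A then (A.card : ℝ)⁻¹ else 0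

/-- The uniform distribution on a set `S`. -/
def unifSet {α : Type*} [Fintype α] (S : Set α) : α → ℝ :=
  fun x => if x ∈ S then (Nat.card S : ℝ)⁻¹ else 0

/-- Kullback–Leibler divergence (base-2 logarithm), with value `⊤` if the support of `f`
is not contained in the support of `g`. -/
def KL {α : Type*} [Fintype α] (f g : α → ℝ) : EReal :=
  if ∀ x, g x = 0 → f x = 0 then
    ((∑ x, f x * Real.logb 2 (f x / g x) : ℝ) : EReal)
  else ⊤

/-- `τ⁻(X) := inf_T D_KL(X ‖ U_A + T)`, the infimum over all `𝔽₂ⁿ`-valued random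
variables `T` independent of `U_A`. -/
def tauMinus {n : ℕ} (A : Finset (F2 n)) (f : F2 n → ℝ) : EReal :=
  ⨅ t : {t : F2 n → ℝ // IsDist t}, KL f (addDist (unifFin A) t.1)

/-- `τ⁺(X) := τ⁻(X) + H(X) - H(U_A)`. -/
def tauPlus {n : ℕ} (A : Finset (F2 n)) (f : F2 n → ℝ) : EReal :=
  tauMinus A f + ((ent f - ent (unifFin A) : ℝ) : EReal)

/-! Both inequalities bound `τ⁻` through a competitor `T`. If `T` competes for `X`, then `T + Y`
competes for `X + Y`, and convolving both arguments of a divergence with `Y` does not increase it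
(log-sum inequality); the entropy terms telescope. For conditioning, fix `T` and write
`q = U_A + T`: where `supp X ⊆ supp q`, `D(X ‖ q) + H(X)` is the cross entropy `-∑ X log q`, which
is linear in the law of `X`, so the conditional bounds `D(X|z ‖ q) + H(X|z)` average to
`D(X ‖ q) + H(X)`; take the infimum over `T`. -/

open Real (log logb)

namespace Real

lemma mul_log_add_sub_mul_le_mul_log_div {a b c : ℝ} (ha : 0 ≤ a) (hb : 0 ≤ b)
    (hab : b = 0 → a = 0) (hc : 0 < c) : a * log c + a - b * c ≤ a * log (a / b) := by
  rcases ha.eq_or_lt with rfl | ha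
  · simp only [zero_mul, add_zero, zero_sub, neg_nonpos]
    positivity
  have hb : 0 < b := hb.lt_of_ne' fun h => ha.ne' (hab h)
  have key := one_sub_inv_le_log_of_pos (x := a / (b * c)) (by positivity)
  have hsplit : log (a / b) = log (a / (b * c)) + log c := by
    rw [← log_mul (by positivity) hc.ne']
    congr 1
    field_simp
  calc a * log c + a - b * c = a * (1 - (a / (b * c))⁻¹) + a * log c := by
        field_simp
        ring
    _ ≤ a * log (a / (b * c)) + a * log c := by gcongr
    _ = a * log (a / b) := by rw [hsplit, mul_add]

/-- The log-sum inequality. -/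
theorem mul_log_sum_div_le_sum_mul_log_div {ι : Type*} (s : Finset ι) {a b : ι → ℝ}
    (ha : ∀ i ∈ s, 0 ≤ a i) (hb : ∀ i ∈ s, 0 ≤ b i) (hab : ∀ i ∈ s, b i = 0 → a i = 0) :
    (∑ i ∈ s, a i) * log ((∑ i ∈ s, a i) / ∑ i ∈ s, b i) ≤ ∑ i ∈ s, a i * log (a i / b i) := by
  set A := ∑ i ∈ s, a i
  set B := ∑ i ∈ s, b i
  rcases (show 0 ≤ A from Finset.sum_nonneg ha).eq_or_lt with hA | hA
  · have ha0 : ∀ i ∈ s, a i = 0 := (Finset.sum_eq_zero_iff_of_nonneg ha).mp hA.symm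
    rw [← hA, zero_mul]
    exact (Finset.sum_eq_zero fun i hi => by rw [ha0 i hi, zero_mul]).ge
  have hB : 0 < B := by
    refine (show 0 ≤ B from Finset.sum_nonneg hb).lt_of_ne' fun hB => hA.ne' ?_
    have hb0 := (Finset.sum_eq_zero_iff_of_nonneg hb).mp hB
    exact Finset.sum_eq_zero fun i hi => hab i hi (hb0 i hi)
  calc A * log (A / B) = ∑ i ∈ s, (a i * log (A / B) + a i - b i * (A / B)) := by
        rw [Finset.sum_sub_distrib, Finset.sum_add_distrib, ← Finset.sum_mul, ← Finset.sum_mul]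
        field_simp
        ring
    _ ≤ ∑ i ∈ s, a i * log (a i / b i) := Finset.sum_le_sum fun i hi =>
        mul_log_add_sub_mul_le_mul_log_div (ha i hi) (hb i hi) (hab i hi) (by positivity)

theorem mul_logb_sum_div_le_sum_mul_logb_div {ι : Type*} (s : Finset ι) {a b : ι → ℝ} {base : ℝ}
    (hbase : 1 < base) (ha : ∀ i ∈ s, 0 ≤ a i) (hb : ∀ i ∈ s, 0 ≤ b i)
    (hab : ∀ i ∈ s, b i = 0 → a i = 0) :
    (∑ i ∈ s, a i) * logb base ((∑ i ∈ s, a i) / ∑ i ∈ s, b i)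
      ≤ ∑ i ∈ s, a i * logb base (a i / b i) := by
  simp only [logb, ← mul_div_assoc, ← Finset.sum_div]
  exact div_le_div_of_nonneg_right (mul_log_sum_div_le_sum_mul_log_div s ha hb hab)
    (log_nonneg hbase.le)

end Real

theorem sum_mul_logb_div_le_of_stochastic {α β : Type*} [Fintype α] [Fintype β]
    {K : α → β → ℝ} (hK : ∀ x s, 0 ≤ K x s) (hK1 : ∀ x, ∑ s, K x s = 1) {f h : α → ℝ}
    (hf : ∀ x, 0 ≤ f x) (hh : ∀ x, 0 ≤ h x) (hfh : ∀ x, h x = 0 → f x = 0) :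
    ∑ s, (∑ x, f x * K x s) * logb 2 ((∑ x, f x * K x s) / ∑ x, h x * K x s)
      ≤ ∑ x, f x * logb 2 (f x / h x) := by
  have hcancel : ∀ x s, f x * K x s * logb 2 (f x * K x s / (h x * K x s))
      = f x * logb 2 (f x / h x) * K x s := fun x s => by
    rcases eq_or_ne (K x s) 0 with hKxs | hKxs
    · simp [hKxs]
    · rw [mul_div_mul_right _ _ hKxs]
      ring
  calc _ ≤ ∑ s, ∑ x, f x * K x s * logb 2 (f x * K x s / (h x * K x s)) :=
        Finset.sum_le_sum fun s _ =>
          Real.mul_logb_sum_div_le_sum_mul_logb_div _ one_lt_two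
            (fun x _ => mul_nonneg (hf x) (hK x s)) (fun x _ => mul_nonneg (hh x) (hK x s))
            fun x _ hx => by rcases mul_eq_zero.mp hx with hx | hx <;> simp [hx, hfh]
    _ = ∑ x, f x * logb 2 (f x / h x) := by
        simp only [hcancel, Finset.sum_comm (γ := β), ← Finset.mul_sum, hK1, mul_one]

section Convolution

variable {α : Type*} [Fintype α] [AddCommGroup α]

lemma addDist_nonneg {f g : α → ℝ} (hf : ∀ x, 0 ≤ f x) (hg : ∀ x, 0 ≤ g x) (s : α) :
    0 ≤ addDist f g s :=
  Finset.sum_nonneg fun x _ => mul_nonneg (hf x) (hg _)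

lemma sum_sub_right_eq (g : α → ℝ) (x : α) : ∑ s, g (s - x) = ∑ s, g s :=
  (Equiv.subRight x).sum_comp g

lemma sum_addDist (f g : α → ℝ) : ∑ s, addDist f g s = (∑ x, f x) * ∑ y, g y := by
  simp only [addDist, Finset.sum_comm (γ := α), ← Finset.mul_sum, sum_sub_right_eq,
    Finset.sum_mul]

lemma IsDist.addDist {f g : α → ℝ} (hf : IsDist f) (hg : IsDist g) : IsDist (addDist f g) :=
  ⟨addDist_nonneg hf.1 hg.1, by rw [sum_addDist, hf.2, hg.2, one_mul]⟩

lemma addDist_assoc (u v w : α → ℝ) :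
    addDist (addDist u v) w = addDist u (addDist v w) := by
  funext s
  simp only [addDist, Finset.sum_mul, Finset.mul_sum]
  rw [Finset.sum_comm]
  refine Finset.sum_congr rfl fun y _ => ?_
  refine Fintype.sum_equiv (Equiv.subRight y) _ _ fun x => ?_
  rw [Equiv.subRight_apply, sub_sub_sub_cancel_right, mul_assoc]

theorem KL_addDist_le {f g h : α → ℝ} (hf : ∀ x, 0 ≤ f x) (hg : IsDist g) (hh : ∀ x, 0 ≤ h x) :
    KL (addDist f g) (addDist h g) ≤ KL f h := by
  by_cases hfh : ∀ x, h x = 0 → f x = 0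
  · have hsupp : ∀ s, addDist h g s = 0 → addDist f g s = 0 := fun s hs => by
      have h0 := (Finset.sum_eq_zero_iff_of_nonneg fun x _ => mul_nonneg (hh x) (hg.1 _)).mp hs
      refine Finset.sum_eq_zero fun x hx => ?_
      rcases mul_eq_zero.mp (h0 x hx) with h0 | h0 <;> simp [h0, hfh]
    rw [KL, KL, if_pos hsupp, if_pos hfh, EReal.coe_le_coe_iff]
    exact sum_mul_logb_div_le_of_stochastic (K := fun x s => g (s - x)) (fun _ _ => hg.1 _)
      (fun x => by rw [sum_sub_right_eq, hg.2]) hf hh hfh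
  · exact le_top.trans_eq (if_neg hfh).symm

end Convolution

lemma EReal.coe_finset_sum {ι : Type*} (s : Finset ι) (f : ι → ℝ) :
    ((∑ i ∈ s, f i : ℝ) : EReal) = ∑ i ∈ s, (f i : EReal) :=
  map_sum (⟨⟨(↑), EReal.coe_zero⟩, EReal.coe_add⟩ : ℝ →+ EReal) f s

lemma EReal.le_iInf_add_coe {ι : Sort*} {L : EReal} {K : ι → EReal} {c : ℝ}
    (h : ∀ i, L ≤ K i + c) : L ≤ (⨅ i, K i) + c := by
  rw [← EReal.sub_le_iff_le_add (.inl (EReal.coe_ne_bot c)) (.inl (EReal.coe_ne_top c))]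
  exact le_iInf fun i => (EReal.sub_le_iff_le_add (.inl (EReal.coe_ne_bot c))
    (.inl (EReal.coe_ne_top c))).2 (h i)

section CrossEntropy

variable {α : Type*} [Fintype α]

def crossEnt (f q : α → ℝ) : ℝ :=
  ∑ x, -(f x * logb 2 (q x))

lemma KL_eq_crossEnt_sub_ent {f q : α → ℝ} (hfq : ∀ x, q x = 0 → f x = 0) :
    KL f q = ((crossEnt f q - ent f : ℝ) : EReal) := by
  rw [KL, if_pos hfq, crossEnt, ent, ← Finset.sum_sub_distrib]
  congr 1
  refine Finset.sum_congr rfl fun x _ => ?_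
  by_cases hfx : f x = 0
  · simp [hfx]
  · rw [Real.logb_div hfx fun hqx => hfx (hfq x hqx)]
    ring

lemma margSnd_mul_condDist {S : Type*} {π : α × S → ℝ} (hπ : ∀ p, 0 ≤ π p) (x : α) (z : S) :
    margSnd π z * condDist π z x = π (x, z) := by
  by_cases hz : margSnd π z = 0
  · rw [hz, zero_mul, (Finset.sum_eq_zero_iff_of_nonneg fun a _ => hπ (a, z)).mp hz x
      (Finset.mem_univ x)]
  · exact mul_div_cancel₀ _ hz

lemma sum_margSnd_mul_crossEnt_condDist {S : Type*} [Fintype S] {π : α × S → ℝ}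
    (hπ : ∀ p, 0 ≤ π p) (q : α → ℝ) :
    ∑ z, margSnd π z * crossEnt (condDist π z) q = crossEnt (margFst π) q := by
  simp only [crossEnt, Finset.mul_sum, mul_neg, ← mul_assoc, margSnd_mul_condDist hπ]
  rw [Finset.sum_comm]
  simp only [margFst, Finset.sum_neg_distrib, Finset.sum_mul]

lemma sum_margSnd {S : Type*} [Fintype S] (π : α × S → ℝ) : ∑ z, margSnd π z = ∑ p, π p :=
  (Fintype.sum_prod_type_right π).symm

end CrossEntropy

lemma unifFin_nonneg {α : Type*} [Fintype α] (A : Finset α) (x : α) : 0 ≤ unifFin A x := by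
  unfold unifFin
  split_ifs <;> positivity

section Tau

variable {n : ℕ} (A : Finset (F2 n))

theorem tauMinus_addDist_le {f g : F2 n → ℝ} (hf : ∀ x, 0 ≤ f x) (hg : IsDist g) :
    tauMinus A (addDist f g) ≤ tauMinus A f :=
  le_iInf fun ⟨t, ht⟩ => iInf_le_of_le ⟨addDist t g, ht.addDist hg⟩ <| by
    rw [← addDist_assoc]
    exact KL_addDist_le hf hg (addDist_nonneg (unifFin_nonneg A) ht.1)

theorem tauPlus_addDist_le {f g : F2 n → ℝ} (hf : ∀ x, 0 ≤ f x) (hg : IsDist g) :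
    tauPlus A (addDist f g) ≤ tauPlus A f + ((ent (addDist f g) - ent f : ℝ) : EReal) := by
  rw [tauPlus, tauPlus, add_assoc, ← EReal.coe_add, sub_add_sub_cancel']
  exact add_le_add (tauMinus_addDist_le A hf hg) le_rfl

lemma tauPlus_le_crossEnt {f t : F2 n → ℝ} (ht : IsDist t)
    (hf : ∀ x, addDist (unifFin A) t x = 0 → f x = 0) :
    tauPlus A f ≤ ((crossEnt f (addDist (unifFin A) t) - ent (unifFin A) : ℝ) : EReal) :=
  calc tauPlus A f ≤ KL f (addDist (unifFin A) t) + ((ent f - ent (unifFin A) : ℝ) : EReal) :=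
        add_le_add (iInf_le_of_le ⟨t, ht⟩ le_rfl) le_rfl
    _ = _ := by rw [KL_eq_crossEnt_sub_ent hf, ← EReal.coe_add, sub_add_sub_cancel]

theorem sum_margSnd_mul_tauPlus_condDist_le {S : Type*} [Fintype S] {π : F2 n × S → ℝ}
    (hπ : IsDist π) {t : F2 n → ℝ} (ht : IsDist t) :
    ∑ z, (margSnd π z : EReal) * tauPlus A (condDist π z)
      ≤ KL (margFst π) (addDist (unifFin A) t)
        + ((ent (margFst π) - ent (unifFin A) : ℝ) : EReal) := by
  set q := addDist (unifFin A) t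
  by_cases hsupp : ∀ x, q x = 0 → margFst π x = 0
  swap
  · rw [KL, if_neg hsupp, EReal.top_add_coe]
    exact le_top
  have hterm : ∀ z, (margSnd π z : EReal) * tauPlus A (condDist π z)
      ≤ ((margSnd π z * (crossEnt (condDist π z) q - ent (unifFin A)) : ℝ) : EReal) := by
    intro z
    rcases eq_or_ne (margSnd π z) 0 with hz | hz
    · simp [hz]
    rw [EReal.coe_mul]
    refine mul_le_mul_of_nonneg_left (tauPlus_le_crossEnt A ht fun x hx => ?_)
      (EReal.coe_nonneg.2 (Finset.sum_nonneg fun x _ => hπ.1 (x, z)))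
    rw [condDist, (Finset.sum_eq_zero_iff_of_nonneg fun z _ => hπ.1 (x, z)).mp (hsupp x hx) z
      (Finset.mem_univ z), zero_div]
  calc _ ≤ ∑ z, ((margSnd π z * (crossEnt (condDist π z) q - ent (unifFin A)) : ℝ) : EReal) :=
        Finset.sum_le_sum fun z _ => hterm z
    _ = _ := by
        rw [← EReal.coe_finset_sum, KL_eq_crossEnt_sub_ent hsupp, ← EReal.coe_add]
        simp only [mul_sub, Finset.sum_sub_distrib, sum_margSnd_mul_crossEnt_condDist hπ.1,
          ← Finset.sum_mul, sum_margSnd, hπ.2, one_mul, sub_add_sub_cancel]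

end Tau

theorem stmt_17_general (n : ℕ) (A : Finset (F2 n)) :
    (∀ f g : F2 n → ℝ, IsDist f → IsDist g →
        tauPlus A (addDist f g)
          ≤ tauPlus A f + ((ent (addDist f g) - ent f : ℝ) : EReal))
    ∧ (∀ (S : Type) [Fintype S], ∀ π : F2 n × S → ℝ, IsDist π →
        (∑ z, (margSnd π z : EReal) * tauPlus A (condDist π z))
          ≤ tauPlus A (margFst π)) :=
  ⟨fun _ _ hf hg => tauPlus_addDist_le A hf.1 hg,
    fun _ _ _ hπ => EReal.le_iInf_add_coe fun ⟨_, ht⟩ =>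
      sum_margSnd_mul_tauPlus_condDist_le A hπ ht⟩

/-- for independent `X ∼ f`, `Y ∼ g` on `𝔽₂ⁿ`,
`τ⁺(X+Y) ≤ τ⁺(X) + H(X+Y) − H(X)`; and for any `(X, Z)` jointly distributed (joint
distribution `π`) with `X` valued in `𝔽₂ⁿ`, `τ⁺(X | Z) ≤ τ⁺(X)`, where
`τ⁺(X|Z) = E_{z∼Z} τ⁺(X|_{Z=z})`. -/
theorem stmt_17 (n : ℕ) (A : Finset (F2 n)) (hA : A.Nonempty) :
    (∀ f g : F2 n → ℝ, IsDist f → IsDist g →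
        tauPlus A (addDist f g)
          ≤ tauPlus A f + ((ent (addDist f g) - ent f : ℝ) : EReal))
    ∧ (∀ (S : Type) [Fintype S], ∀ π : F2 n × S → ℝ, IsDist π →
        (∑ z, (margSnd π z : EReal) * tauPlus A (condDist π z))
          ≤ tauPlus A (margFst π)) :=
  stmt_17_general n A
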